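/- Let E be a complex Hilbert space and S the unilateral shift on ℓ²(ℕ,E). Let Y and Z be bounded operators on ℓ²(ℕ,E) such that YS = SY, ZS = SZ, Y = Z*S and Z = Y*S. Then there exist unique bounded operators A and B on E such that Y = Ã + S∘B̃ and Z = (B*)~ + S∘(A*)~; that is, Y and Z are the Toeplitz operators with the degree-one analytic symbols Φ_Y(z) = A + zB and Φ_Z(z) = B* + zA*. -/

import Mathlib

noncomputable section

open scoped ENNReal

namespace GammaModel

variable {E : Type*} [NormedAddCommGroup E] [NormedSpace ℂ E]

/-- The `E`-valued Hardy space `H²_E(𝔻)`, identified with `ℓ²(ℕ, E)`. -/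
abbrev L2 (E : Type*) [NormedAddCommGroup E] [NormedSpace ℂ E] : Type _ :=
  lp (fun _ : ℕ => E) 2

/-- The underlying function of the unilateral shift. -/
def shiftFun (f : ℕ → E) : ℕ → E
  | 0 => 0
  | (k + 1) => f k

lemma rpow_toReal_two (x : ℝ) : x ^ ((2 : ℝ≥0∞)).toReal = x ^ (2 : ℕ) := by
  rw [show ((2 : ℝ≥0∞)).toReal = ((2 : ℕ) : ℝ) by norm_num, Real.rpow_natCast]

lemma summable_sq_of_mem (f : L2 E) :
    Summable (fun k => ‖(f : ∀ _ : ℕ, E) k‖ ^ (2 : ℕ)) := by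
  have h := lp.memℓp f
  rw [memℓp_gen_iff (by norm_num)] at h
  simpa [rpow_toReal_two] using h

lemma memℓp_shiftFun (f : L2 E) : Memℓp (shiftFun (f : ∀ _ : ℕ, E)) 2 := by
  rw [memℓp_gen_iff (by norm_num)]
  apply (summable_nat_add_iff 1).mp
  simpa [shiftFun, rpow_toReal_two] using summable_sq_of_mem f

/-- The unilateral shift as a linear map on `ℓ²(ℕ, E)`. -/
def shiftLM : L2 E →ₗ[ℂ] L2 E where
  toFun f := ⟨shiftFun (f : ∀ _ : ℕ, E), memℓp_shiftFun f⟩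
  map_add' f g := by
    ext k
    cases k <;> simp [shiftFun, lp.coeFn_add, Pi.add_apply] <;> first | rfl | (erw [Pi.add_apply]; simp [shiftFun])
  map_smul' c f := by
    ext k
    cases k <;> simp [shiftFun, lp.coeFn_smul, Pi.smul_apply]

lemma norm_shiftLM (f : L2 E) : ‖shiftLM f‖ = ‖f‖ := by
  have h2 : (0:ℝ) < ((2 : ℝ≥0∞)).toReal := by norm_num
  have hs := lp.norm_rpow_eq_tsum h2 (shiftLM f)
  have hf := lp.norm_rpow_eq_tsum h2 f
  have hsum : Summable (fun k => ‖(shiftLM f : ∀ _ : ℕ, E) k‖ ^ ((2:ℝ≥0∞)).toReal) := by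
    have h := memℓp_shiftFun f
    rw [memℓp_gen_iff h2] at h
    exact h
  have key : ∑' k, ‖(shiftLM f : ∀ _ : ℕ, E) k‖ ^ ((2:ℝ≥0∞)).toReal
      = ∑' k, ‖(f : ∀ _ : ℕ, E) k‖ ^ ((2:ℝ≥0∞)).toReal := by
    rw [hsum.tsum_eq_zero_add]
    simp [shiftLM, shiftFun]
  have : ‖shiftLM f‖ ^ ((2:ℝ≥0∞)).toReal = ‖f‖ ^ ((2:ℝ≥0∞)).toReal := by
    rw [hs, hf, key]
  rw [rpow_toReal_two, rpow_toReal_two] at this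
  have h1 : (0:ℝ) ≤ ‖shiftLM f‖ := norm_nonneg _
  have h2' : (0:ℝ) ≤ ‖f‖ := norm_nonneg _
  nlinarith [this, h1, h2']

/-- The unilateral shift `S` on `ℓ²(ℕ, E)`: `(Sf)(0) = 0`, `(Sf)(k+1) = f(k)`. -/
def shiftL : L2 E →L[ℂ] L2 E :=
  LinearMap.mkContinuous shiftLM 1 (fun f => by rw [norm_shiftLM]; simp)

@[simp] lemma shiftL_apply_zero (f : L2 E) : (shiftL f : ∀ _ : ℕ, E) 0 = 0 := rfl

@[simp] lemma shiftL_apply_succ (f : L2 E) (k : ℕ) :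
    (shiftL f : ∀ _ : ℕ, E) (k + 1) = (f : ∀ _ : ℕ, E) k := rfl

lemma memℓp_diagFun (C : E →L[ℂ] E) (f : L2 E) :
    Memℓp (fun k => C ((f : ∀ _ : ℕ, E) k)) 2 := by
  rw [memℓp_gen_iff (by norm_num)]
  have hf := summable_sq_of_mem f
  refine Summable.of_nonneg_of_le (f := fun k => ‖C‖ ^ (2:ℕ) * ‖(f : ∀ _ : ℕ, E) k‖ ^ (2:ℕ))
    (fun k => by positivity) (fun k => ?_) (hf.mul_left _)
  show ‖C ((f : ∀ _ : ℕ, E) k)‖ ^ ((2:ℝ≥0∞)).toReal ≤ ‖C‖ ^ (2:ℕ) * ‖(f : ∀ _ : ℕ, E) k‖ ^ (2:ℕ)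
  rw [rpow_toReal_two, ← mul_pow]
  exact pow_le_pow_left₀ (norm_nonneg _) (C.le_opNorm _) 2

/-- The diagonal operator `C̃` on `ℓ²(ℕ, E)`: `(C̃ f)(k) = C (f k)`. -/
def diagLM (C : E →L[ℂ] E) : L2 E →ₗ[ℂ] L2 E where
  toFun f := ⟨fun k => C ((f : ∀ _ : ℕ, E) k), memℓp_diagFun C f⟩
  map_add' f g := by ext k; simp [lp.coeFn_add, Pi.add_apply]; rfl
  map_smul' c f := by ext k; simp [lp.coeFn_smul, Pi.smul_apply]

lemma norm_diagLM (C : E →L[ℂ] E) (f : L2 E) : ‖diagLM C f‖ ≤ ‖C‖ * ‖f‖ := by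
  have h2 : (0:ℝ) < ((2 : ℝ≥0∞)).toReal := by norm_num
  have hs := lp.norm_rpow_eq_tsum h2 (diagLM C f)
  have hf := lp.norm_rpow_eq_tsum h2 f
  have hsum : Summable (fun k => ‖(diagLM C f : ∀ _ : ℕ, E) k‖ ^ ((2:ℝ≥0∞)).toReal) := by
    have h := memℓp_diagFun C f
    rw [memℓp_gen_iff h2] at h
    exact h
  have hle : ‖diagLM C f‖ ^ (2:ℕ) ≤ (‖C‖ * ‖f‖) ^ (2:ℕ) := by
    rw [← rpow_toReal_two, hs]
    calc ∑' k, ‖(diagLM C f : ∀ _ : ℕ, E) k‖ ^ ((2:ℝ≥0∞)).toReal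
        ≤ ∑' k, ‖C‖ ^ (2:ℕ) * ‖(f : ∀ _ : ℕ, E) k‖ ^ (2:ℕ) := by
          apply Summable.tsum_le_tsum _ hsum ((summable_sq_of_mem f).mul_left _)
          intro k
          show ‖(diagLM C f : ∀ _ : ℕ, E) k‖ ^ ((2:ℝ≥0∞)).toReal
            ≤ ‖C‖ ^ (2:ℕ) * ‖(f : ∀ _ : ℕ, E) k‖ ^ (2:ℕ)
          rw [rpow_toReal_two, ← mul_pow]
          exact pow_le_pow_left₀ (norm_nonneg _) (C.le_opNorm _) 2
      _ = ‖C‖ ^ (2:ℕ) * ∑' k, ‖(f : ∀ _ : ℕ, E) k‖ ^ (2:ℕ) := by rw [tsum_mul_left]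
      _ = (‖C‖ * ‖f‖) ^ (2:ℕ) := by
          rw [mul_pow]
          congr 1
          rw [← rpow_toReal_two ‖f‖, hf]
          exact (tsum_congr (fun k => by rw [rpow_toReal_two])).symm
  have := le_of_pow_le_pow_left₀ (by norm_num) (by positivity) hle
  exact this

/-- The operator `C̃` on `ℓ²(ℕ, E)` induced by `C : E →L[ℂ] E`, `(C̃ f)(k) = C (f k)`. -/
def diagL (C : E →L[ℂ] E) : L2 E →L[ℂ] L2 E :=
  LinearMap.mkContinuous (diagLM C) ‖C‖ (norm_diagLM C)

@[simp] lemma diagL_apply (C : E →L[ℂ] E) (f : L2 E) (k : ℕ) :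
    (diagL C f : ∀ _ : ℕ, E) k = C ((f : ∀ _ : ℕ, E) k) := rfl

end GammaModel

/-! An operator `T` on `ℓ²(ℕ, E)` is a block matrix `(T i j)` of operators on `E`. Commuting with
the shift makes it a lower-triangular Toeplitz matrix, determined by its first column. The relation
`Y = Z† S` reads `Y i j = (Z (j + 1) i)†`, and likewise with `Y` and `Z` swapped; triangularity of
`Z` then kills `Y i 0` for `i ≥ 2`, so the first column of `Y` is `(A, B, 0, …)`, and that of `Z`
is `(B†, A†, 0, …)`. -/

namespace GammaModel

open ContinuousLinearMap

section Shift

variable {E : Type*} [NormedAddCommGroup E] [NormedSpace ℂ E]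

lemma shiftL_single (k : ℕ) (x : E) :
    shiftL (lp.single 2 k x : L2 E) = lp.single 2 (k + 1) x := by
  ext (_ | m)
  · simp
  · simp [lp.single_apply, Pi.single_apply]

lemma diagL_single (C : E →L[ℂ] E) (k : ℕ) (x : E) :
    diagL C (lp.single 2 k x : L2 E) = lp.single 2 k (C x) := by
  ext m
  by_cases h : m = k <;> simp [h]

lemma commute_diagL_shiftL (C : E →L[ℂ] E) : Commute (diagL C) (shiftL : L2 E →L[ℂ] L2 E) := by
  ext f (_ | k) <;> simp

lemma ext_single {T T' : L2 E →L[ℂ] L2 E}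
    (h : ∀ k (x : E), T (lp.single 2 k x) = T' (lp.single 2 k x)) : T = T' :=
  lp.ext_continuousLinearMap ENNReal.ofNat_ne_top fun k => ContinuousLinearMap.ext (h k)

def matrixEntry (T : L2 E →L[ℂ] L2 E) (i j : ℕ) : E →L[ℂ] E :=
  lp.evalCLM ℂ (fun _ => E) 2 i ∘L T ∘L lp.singleContinuousLinearMap ℂ (fun _ => E) 2 j

lemma matrixEntry_apply (T : L2 E →L[ℂ] L2 E) (i j : ℕ) (x : E) :
    matrixEntry T i j x = T (lp.single 2 j x) i := rfl

lemma matrixEntry_diagL_add_shiftL_comp_zero_zero (A B : E →L[ℂ] E) :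
    matrixEntry (diagL A + shiftL.comp (diagL B)) 0 0 = A := by
  ext x
  simp [matrixEntry_apply]

lemma matrixEntry_diagL_add_shiftL_comp_one_zero (A B : E →L[ℂ] E) :
    matrixEntry (diagL A + shiftL.comp (diagL B)) 1 0 = B := by
  ext x
  simp [matrixEntry_apply, shiftL_apply_succ _ 0]

variable {T T' : L2 E →L[ℂ] L2 E}

lemma apply_single_succ_of_commute (hT : Commute T shiftL) (k : ℕ) (x : E) :
    T (lp.single 2 (k + 1) x) = shiftL (T (lp.single 2 k x)) := by
  rw [← shiftL_single]
  exact DFunLike.congr_fun hT.eq _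

lemma eq_of_commute_of_apply_single_zero (hT : Commute T shiftL) (hT' : Commute T' shiftL)
    (h : ∀ x : E, T (lp.single 2 0 x) = T' (lp.single 2 0 x)) : T = T' := by
  refine ext_single fun k => ?_
  induction k with
  | zero => exact h
  | succ k ih =>
    intro x
    rw [apply_single_succ_of_commute hT, apply_single_succ_of_commute hT', ih]

lemma matrixEntry_succ_succ_of_commute (hT : Commute T shiftL) (i j : ℕ) :
    matrixEntry T (i + 1) (j + 1) = matrixEntry T i j := by
  ext x
  rw [matrixEntry_apply, apply_single_succ_of_commute hT, shiftL_apply_succ, matrixEntry_apply]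

lemma matrixEntry_zero_succ_of_commute (hT : Commute T shiftL) (j : ℕ) :
    matrixEntry T 0 (j + 1) = 0 := by
  ext x
  rw [matrixEntry_apply, apply_single_succ_of_commute hT, shiftL_apply_zero, zero_apply]

lemma matrixEntry_eq_zero_of_lt_of_commute (hT : Commute T shiftL) {i j : ℕ} (hij : i < j) :
    matrixEntry T i j = 0 := by
  obtain ⟨j, rfl⟩ := Nat.exists_eq_add_of_lt hij
  induction i with
  | zero => simpa using matrixEntry_zero_succ_of_commute hT j
  | succ i ih =>
    rw [show i + 1 + j + 1 = i + j + 1 + 1 by omega, matrixEntry_succ_succ_of_commute hT]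
    exact ih (by omega)

lemma eq_diagL_add_shiftL_comp_of_commute (hT : Commute T shiftL)
    (hcol : ∀ i, matrixEntry T (i + 2) 0 = 0) :
    T = diagL (matrixEntry T 0 0) + shiftL.comp (diagL (matrixEntry T 1 0)) := by
  refine eq_of_commute_of_apply_single_zero hT
    ((commute_diagL_shiftL _).add_left ((Commute.refl _).mul_left (commute_diagL_shiftL _))) ?_
  intro x
  rw [add_apply, comp_apply, diagL_single, diagL_single, shiftL_single]
  ext (_ | _ | i)
  · simp [← matrixEntry_apply]
  · simp [← matrixEntry_apply]
  · simp [← matrixEntry_apply, hcol, lp.single_apply]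

end Shift

section Adjoint

variable {E : Type*} [NormedAddCommGroup E] [InnerProductSpace ℂ E] [CompleteSpace E]

lemma matrixEntry_eq_adjoint_of_eq_adjoint_mul_shiftL {Y Z : L2 E →L[ℂ] L2 E}
    (h : Y = adjoint Z * shiftL) (i j : ℕ) :
    matrixEntry Y i j = adjoint (matrixEntry Z (j + 1) i) := by
  refine (eq_adjoint_iff _ _).2 fun x y => ?_
  calc inner ℂ (Y (lp.single 2 j x) i) y
      = inner ℂ (adjoint Z (shiftL (lp.single 2 j x))) (lp.single 2 i y) := by
        rw [← lp.inner_single_right, h]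
        rfl
    _ = inner ℂ x (Z (lp.single 2 i y) (j + 1)) := by
        rw [adjoint_inner_left, shiftL_single, lp.inner_single_left]

end Adjoint

end GammaModel

open GammaModel ContinuousLinearMap

/-- If `Y, Z` on `ℓ²(ℕ,E)` commute with the shift `S` and satisfy `Y = Z* S`
and `Z = Y* S`, then they are Toeplitz operators with degree-one analytic symbols:
`Y = Ã + S∘B̃` and `Z = (B*)~ + S∘(A*)~` for unique bounded operators `A, B` on `E`. -/
theorem toeplitz_of_shift_relations {E : Type*}
    [NormedAddCommGroup E] [InnerProductSpace ℂ E] [CompleteSpace E]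
    (Y Z : L2 E →L[ℂ] L2 E)
    (hYS : Y * shiftL = shiftL * Y) (hZS : Z * shiftL = shiftL * Z)
    (hY : Y = adjoint Z * shiftL) (hZ : Z = adjoint Y * shiftL) :
    ∃! AB : (E →L[ℂ] E) × (E →L[ℂ] E),
      Y = diagL AB.1 + shiftL.comp (diagL AB.2) ∧
      Z = diagL (adjoint AB.2) + shiftL.comp (diagL (adjoint AB.1)) := by
  have hYcol (i : ℕ) : matrixEntry Y (i + 2) 0 = 0 := by
    rw [matrixEntry_eq_adjoint_of_eq_adjoint_mul_shiftL hY,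
      matrixEntry_eq_zero_of_lt_of_commute hZS (by omega), map_zero]
  have hZcol (i : ℕ) : matrixEntry Z (i + 2) 0 = 0 := by
    rw [matrixEntry_eq_adjoint_of_eq_adjoint_mul_shiftL hZ,
      matrixEntry_eq_zero_of_lt_of_commute hYS (by omega), map_zero]
  have hZ00 : matrixEntry Z 0 0 = adjoint (matrixEntry Y 1 0) :=
    matrixEntry_eq_adjoint_of_eq_adjoint_mul_shiftL hZ 0 0
  have hZ10 : matrixEntry Z 1 0 = adjoint (matrixEntry Y 0 0) := by
    rw [matrixEntry_eq_adjoint_of_eq_adjoint_mul_shiftL hZ, matrixEntry_succ_succ_of_commute hYS]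
  refine ⟨(matrixEntry Y 0 0, matrixEntry Y 1 0),
    ⟨eq_diagL_add_shiftL_comp_of_commute hYS hYcol, ?_⟩, ?_⟩
  · rw [← hZ00, ← hZ10]
    exact eq_diagL_add_shiftL_comp_of_commute hZS hZcol
  · rintro ⟨A, B⟩ ⟨hYAB, -⟩
    rw [hYAB, matrixEntry_diagL_add_shiftL_comp_zero_zero,
      matrixEntry_diagL_add_shiftL_comp_one_zero]
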